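/- arXiv:1205.6686 — 6 statements merged into one kernel-verified Lean document; each statement's English description precedes it below -/
import Mathlib

section
/- Suppose Ω is a Cantor group and T : Ω → Ω a minimal translation. Then there exists a dense Gδ subset 𝒢 of C(Ω,ℝ) such that for every f ∈ 𝒢 and every ω ∈ Ω, the sequence V_ω(n) = f(Tⁿ(ω)) is a Gordon potential. -/
/-!
A continuous function on a compact totally disconnected group is uniformly close to a function
invariant under right translation by an open subgroup `H`. Since `H` has finite index, some power
`ω₀ ^ q`, with `q` as large as we like, lies in `H`, and the approximant is then exactly
`q`-periodic along every orbit. Hence for each `k` the functions `f` with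
`‖f ∘ T ^ q - f‖ < (k + 1) ^ (-q)` for some `q > k` form an open dense subset of `C(Ω, ℝ)`, and by
Baire's theorem their intersection is a dense Gδ set, all of whose members generate Gordon
potentials along every orbit.
-/

open Filter Topology

/-- A bounded sequence `V : ℤ → ℝ` is a Gordon potential if there are positive integers
`q k → ∞` with `max_{1 ≤ n ≤ q k} |V n - V (n ± q k)| ≤ k ^ (-q k)` for all `k ≥ 1`. -/
def IsGordonPotential (V : ℤ → ℝ) : Prop :=
  ∃ q : ℕ → ℕ, (∀ k, 0 < q k) ∧ Tendsto q atTop atTop ∧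
    ∀ k : ℕ, 1 ≤ k → ∀ n : ℤ, 1 ≤ n → n ≤ (q k : ℤ) →
      |V n - V (n + (q k : ℤ))| ≤ ((k : ℝ) ^ q k)⁻¹ ∧
        |V n - V (n - (q k : ℤ))| ≤ ((k : ℝ) ^ q k)⁻¹

theorem isGordonPotential_of_forall_exists_lt {V : ℤ → ℝ}
    (hV : ∀ k : ℕ, ∃ q > k, ∀ n : ℤ, |V (n + q) - V n| ≤ (((k : ℝ) + 1) ^ q)⁻¹) :
    IsGordonPotential V := by
  choose q hqk hq using hV
  refine ⟨q, fun k => (Nat.zero_le k).trans_lt (hqk k),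
    tendsto_atTop_mono (fun k => (hqk k).le) tendsto_id, fun k hk n _ _ => ?_⟩
  have hbound : (((k : ℝ) + 1) ^ q k)⁻¹ ≤ ((k : ℝ) ^ q k)⁻¹ := by
    have : (0 : ℝ) < k := by exact_mod_cast hk
    gcongr
    linarith
  constructor
  · rw [abs_sub_comm]
    exact (hq k n).trans hbound
  · simpa using (hq k (n - q k)).trans hbound

section CompactGroup

variable {G : Type*} [Group G] [TopologicalSpace G] [IsTopologicalGroup G] [CompactSpace G]
  {E : Type*} [PseudoMetricSpace E]

theorem ContinuousMap.eventually_nhds_one_forall_dist_mul_lt (f : C(G, E)) {ε : ℝ} (hε : 0 < ε) :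
    ∀ᶠ h in 𝓝 (1 : G), ∀ x, dist (f (x * h)) (f x) < ε := by
  have hP : ∀ y ∈ (Set.univ : Set G),
      ∀ᶠ z : G × G in 𝓝 (1, y), dist (f (z.2 * z.1)) (f z.2) < ε := fun y _ => by
    have hc : Continuous fun z : G × G => dist (f (z.2 * z.1)) (f z.2) := by fun_prop
    exact hc.continuousAt.eventually_lt continuousAt_const (by simpa using hε)
  simpa using isCompact_univ.eventually_forall_of_forall_eventually hP

theorem ContinuousMap.exists_openSubgroup_forall_dist_mul_lt [TotallyDisconnectedSpace G]
    (f : C(G, E)) {ε : ℝ} (hε : 0 < ε) :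
    ∃ H : OpenSubgroup G, ∀ h ∈ H, ∀ x, dist (f (x * h)) (f x) < ε := by
  obtain ⟨U, hUf, hU, h1U⟩ := mem_nhds_iff.mp (f.eventually_nhds_one_forall_dist_mul_lt hε)
  obtain ⟨H, hHU⟩ := ProfiniteGrp.exist_openNormalSubgroup_sub_open_nhds_of_one hU h1U
  exact ⟨H.toOpenSubgroup, fun h hh => hUf (hHU hh)⟩

theorem ContinuousMap.exists_mulRight_invariant_dist_lt (f : C(G, E)) (H : OpenSubgroup G)
    {ε : ℝ} (hε : 0 < ε) (hfH : ∀ h ∈ H, ∀ x, dist (f (x * h)) (f x) < ε) :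
    ∃ g : C(G, E), (∀ h ∈ H, ∀ x, g (x * h) = g x) ∧ dist g f < ε := by
  let g : C(G, E) := ⟨fun x => f (QuotientGroup.mk (s := H.toSubgroup) x).out,
    (continuous_of_discreteTopology (f := fun c : G ⧸ H.toSubgroup => f c.out)).comp
      continuous_quotient_mk'⟩
  refine ⟨g, fun h hh x => ?_, (ContinuousMap.dist_lt_iff hε).2 fun x => ?_⟩
  · simp only [g, ContinuousMap.coe_mk, QuotientGroup.mk_mul_of_mem x hh]
  · obtain ⟨⟨h, hh⟩, hx⟩ := QuotientGroup.mk_out_eq_mul H.toSubgroup x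
    simpa [g, hx] using hfH h hh x

theorem OpenSubgroup.exists_pow_mem (H : OpenSubgroup G) (a : G) : ∃ n > 0, a ^ n ∈ H := by
  obtain ⟨n, hn, -, hnH⟩ := H.toSubgroup.exists_pow_mem_of_index_ne_zero
    H.toSubgroup.index_ne_zero_of_finite a
  exact ⟨n, hn, hnH⟩

/-- The shift to `k + 1` keeps the bound positive at `k = 0`, where `(0 ^ q)⁻¹ = 0`. -/
def gordonSet (a : G) (k : ℕ) : Set C(G, ℝ) :=
  ⋃ q > k, {f | ‖f.comp (ContinuousMap.mulRight (a ^ q)) - f‖ < (((k : ℝ) + 1) ^ q)⁻¹}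

theorem isOpen_gordonSet (a : G) (k : ℕ) : IsOpen (gordonSet a k) :=
  isOpen_biUnion fun _ _ =>
    isOpen_lt ((ContinuousMap.continuous_precomp _).sub continuous_id).norm continuous_const

theorem dense_gordonSet [TotallyDisconnectedSpace G] (a : G) (k : ℕ) :
    Dense (gordonSet a k) := by
  refine Metric.dense_iff.2 fun f ε hε => ?_
  obtain ⟨H, hfH⟩ := f.exists_openSubgroup_forall_dist_mul_lt hε
  obtain ⟨g, hgH, hgf⟩ := f.exists_mulRight_invariant_dist_lt H hε hfH
  obtain ⟨n, hn, hnH⟩ := H.exists_pow_mem a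
  have hperiodic : g.comp (ContinuousMap.mulRight (a ^ (n * (k + 1)))) = g := by
    ext x
    exact hgH _ (by rw [pow_mul]; exact pow_mem hnH _) x
  refine ⟨g, Metric.mem_ball.2 hgf, Set.mem_biUnion (x := n * (k + 1))
    ((Nat.lt_succ_self k).trans_le (Nat.le_mul_of_pos_left _ hn)) ?_⟩
  simp only [Set.mem_ofPred_eq, hperiodic, sub_self, norm_zero]
  positivity

theorem isGordonPotential_of_mem_iInter_gordonSet {a : G} {f : C(G, ℝ)}
    (hf : f ∈ ⋂ k, gordonSet a k) (ω : G) : IsGordonPotential fun n : ℤ => f (ω * a ^ n) := by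
  refine isGordonPotential_of_forall_exists_lt fun k => ?_
  obtain ⟨q, hqk, hq⟩ := Set.mem_iUnion₂.1 (Set.mem_iInter.1 hf k)
  refine ⟨q, hqk, fun n => ?_⟩
  have hx := (f.comp (ContinuousMap.mulRight (a ^ q)) - f).norm_coe_le_norm (ω * a ^ n)
  rw [zpow_add, zpow_natCast, ← mul_assoc]
  exact hx.trans (le_of_lt hq)

end CompactGroup

theorem generic_gordon_potential_general
    (Ω : Type) [TopologicalSpace Ω] [CompactSpace Ω]
    [TotallyDisconnectedSpace Ω] [CommGroup Ω] [IsTopologicalGroup Ω]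
    (ω₀ : Ω) :
    ∃ 𝒢 : Set C(Ω, ℝ), Dense 𝒢 ∧ IsGδ 𝒢 ∧
      ∀ f ∈ 𝒢, ∀ ω : Ω, IsGordonPotential (fun n : ℤ => f (ω * ω₀ ^ n)) :=
  ⟨⋂ k, gordonSet ω₀ k, dense_iInter_of_isOpen (isOpen_gordonSet ω₀) (dense_gordonSet ω₀),
    .iInter_of_isOpen (isOpen_gordonSet ω₀),
    fun _ hf ω => isGordonPotential_of_mem_iInter_gordonSet hf ω⟩

/-- Suppose `Ω` is a Cantor group and `T ω = ω * ω₀` a minimal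
translation.  Then there is a dense Gδ set `𝒢 ⊆ C(Ω, ℝ)` such that for every `f ∈ 𝒢`
and every `ω ∈ Ω`, the sequence `V_ω(n) = f(Tⁿ ω) = f(ω * ω₀ ^ n)` is a Gordon
potential. -/
theorem generic_gordon_potential
    (Ω : Type) [TopologicalSpace Ω] [CompactSpace Ω] [TopologicalSpace.MetrizableSpace Ω]
    [TotallyDisconnectedSpace Ω] [PerfectSpace Ω] [CommGroup Ω] [IsTopologicalGroup Ω]
    (ω₀ : Ω) (hmin : ∀ ω : Ω, Dense (Set.range fun n : ℤ => ω * ω₀ ^ n)) :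
    ∃ 𝒢 : Set C(Ω, ℝ), Dense 𝒢 ∧ IsGδ 𝒢 ∧
      ∀ f ∈ 𝒢, ∀ ω : Ω, IsGordonPotential (fun n : ℤ => f (ω * ω₀ ^ n)) :=
  generic_gordon_potential_general Ω ω₀
end

section
/- For every matrix M ∈ SL(2,ℝ) there exist constants m₁, m₂ ∈ (0,∞) with the following property: for all nonzero vectors A, B ∈ ℝ², if Δθ ∈ [0,π] denotes the angle between A and B and Δθ̃ ∈ [0,π] denotes the angle between MA and MB, then m₁·Δθ ≤ Δθ̃ ≤ m₂·Δθ. -/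
/-!
For unit vectors the chord and the angle are comparable: `‖u - v‖ = 2 sin (θ / 2)`, so
`(2 / π) θ ≤ ‖u - v‖ ≤ θ`. A linear isomorphism `e` stretches the chord between two unit
vectors by at most `‖e‖`, and renormalising the images costs at most a factor `2 ‖e⁻¹‖`;
hence `e` multiplies angles by at most `π ‖e‖ ‖e⁻¹‖`, and applying this to `e⁻¹` gives the
lower bound.
-/

open InnerProductGeometry

/-- Apply a `2 × 2` real matrix to a vector of `ℝ² = EuclideanSpace ℝ (Fin 2)`. -/
noncomputable def matApply (M : Matrix (Fin 2) (Fin 2) ℝ) (v : EuclideanSpace ℝ (Fin 2)) :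
    EuclideanSpace ℝ (Fin 2) :=
  (WithLp.equiv 2 (Fin 2 → ℝ)).symm (M.mulVec ((WithLp.equiv 2 (Fin 2 → ℝ)) v))

open Real NormedSpace

namespace NormedSpace

variable {V : Type*} [NormedAddCommGroup V] [NormedSpace ℝ V]

theorem norm_normalize_le_one (x : V) : ‖normalize x‖ ≤ 1 := by
  rcases eq_or_ne x 0 with rfl | hx
  · simp
  · exact (norm_normalize_eq_one_iff.mpr hx).le

theorem norm_mul_norm_normalize_sub_normalize_le (x y : V) :
    ‖x‖ * ‖normalize x - normalize y‖ ≤ 2 * ‖x - y‖ :=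
  calc ‖x‖ * ‖normalize x - normalize y‖
      = ‖(x - y) + (‖y‖ - ‖x‖) • normalize y‖ := by
        rw [← norm_norm x, ← norm_smul, norm_norm, smul_sub, sub_smul, norm_smul_normalize,
          norm_smul_normalize]
        abel_nf
    _ ≤ ‖x - y‖ + |‖y‖ - ‖x‖| * 1 := by
        grw [norm_add_le, norm_smul, norm_normalize_le_one, Real.norm_eq_abs]
    _ ≤ 2 * ‖x - y‖ := by
        linarith [abs_norm_sub_norm_le y x, norm_sub_rev y x]

end NormedSpace

namespace InnerProductGeometry

variable {V W : Type*} [NormedAddCommGroup V] [InnerProductSpace ℝ V]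
  [NormedAddCommGroup W] [InnerProductSpace ℝ W]

theorem norm_sub_eq_two_mul_sin_angle_div_two {u v : V} (hu : ‖u‖ = 1) (hv : ‖v‖ = 1) :
    ‖u - v‖ = 2 * sin (angle u v / 2) := by
  have h_cos : cos (angle u v) = 1 - 2 * sin (angle u v / 2) ^ 2 := by
    have := cos_two_mul' (angle u v / 2)
    rw [mul_div_cancel₀ _ two_ne_zero] at this
    nlinarith [sin_sq_add_cos_sq (angle u v / 2)]
  have h_sq : ‖u - v‖ ^ 2 = (2 * sin (angle u v / 2)) ^ 2 := by
    rw [sq, norm_sub_sq_eq_norm_sq_add_norm_sq_sub_two_mul_norm_mul_norm_mul_cos_angle, hu, hv,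
      h_cos]
    ring
  have h_sin : 0 ≤ sin (angle u v / 2) :=
    sin_nonneg_of_nonneg_of_le_pi (by linarith [angle_nonneg u v])
      (by linarith [angle_le_pi u v, pi_pos])
  exact (pow_left_inj₀ (norm_nonneg _) (by positivity) two_ne_zero).mp h_sq

theorem norm_sub_le_angle {u v : V} (hu : ‖u‖ = 1) (hv : ‖v‖ = 1) : ‖u - v‖ ≤ angle u v := by
  rw [norm_sub_eq_two_mul_sin_angle_div_two hu hv]
  linarith [sin_le (by linarith [angle_nonneg u v] : 0 ≤ angle u v / 2)]

theorem angle_le_pi_div_two_mul_norm_sub {u v : V} (hu : ‖u‖ = 1) (hv : ‖v‖ = 1) :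
    angle u v ≤ π / 2 * ‖u - v‖ := by
  have h_jordan := mul_le_sin (by linarith [angle_nonneg u v] : 0 ≤ angle u v / 2)
    (by linarith [angle_le_pi u v])
  rw [norm_sub_eq_two_mul_sin_angle_div_two hu hv]
  calc angle u v = π / 2 * (2 * (2 / π * (angle u v / 2))) := by field_simp
    _ ≤ π / 2 * (2 * sin (angle u v / 2)) := by gcongr

theorem angle_map_le_mul_angle_of_norm_eq_one (e : V ≃L[ℝ] W) {u v : V}
    (hu : ‖u‖ = 1) (hv : ‖v‖ = 1) :
    angle (e u) (e v) ≤ π * ‖(e : V →L[ℝ] W)‖ * ‖(e.symm : W →L[ℝ] V)‖ * angle u v := by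
  have heu : e u ≠ 0 := by simpa using ne_zero_of_norm_ne_zero (hu ▸ one_ne_zero)
  have hev : e v ≠ 0 := by simpa using ne_zero_of_norm_ne_zero (hv ▸ one_ne_zero)
  have h_inv : 1 ≤ ‖(e.symm : W →L[ℝ] V)‖ * ‖e u‖ := by
    simpa [hu] using (e.symm : W →L[ℝ] V).le_opNorm (e u)
  have h_chord : ‖normalize (e u) - normalize (e v)‖ ≤
      2 * ‖(e : V →L[ℝ] W)‖ * ‖(e.symm : W →L[ℝ] V)‖ * ‖u - v‖ :=
    calc ‖normalize (e u) - normalize (e v)‖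
        ≤ ‖(e.symm : W →L[ℝ] V)‖ * (‖e u‖ * ‖normalize (e u) - normalize (e v)‖) := by
          grw [← mul_assoc, ← h_inv, one_mul]
      _ ≤ ‖(e.symm : W →L[ℝ] V)‖ * (2 * ‖e u - e v‖) := by
          grw [norm_mul_norm_normalize_sub_normalize_le]
      _ ≤ ‖(e.symm : W →L[ℝ] V)‖ * (2 * (‖(e : V →L[ℝ] W)‖ * ‖u - v‖)) := by
          grw [← map_sub, ← e.coe_coe, ContinuousLinearMap.le_opNorm]
      _ = 2 * ‖(e : V →L[ℝ] W)‖ * ‖(e.symm : W →L[ℝ] V)‖ * ‖u - v‖ := by ring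
  calc angle (e u) (e v) = angle (normalize (e u)) (normalize (e v)) := by
        rw [angle_normalize_left, angle_normalize_right]
    _ ≤ π / 2 * ‖normalize (e u) - normalize (e v)‖ :=
        angle_le_pi_div_two_mul_norm_sub (norm_normalize_eq_one_iff.mpr heu)
          (norm_normalize_eq_one_iff.mpr hev)
    _ ≤ π / 2 * (2 * ‖(e : V →L[ℝ] W)‖ * ‖(e.symm : W →L[ℝ] V)‖ * angle u v) := by
        grw [h_chord, norm_sub_le_angle hu hv]
    _ = π * ‖(e : V →L[ℝ] W)‖ * ‖(e.symm : W →L[ℝ] V)‖ * angle u v := by ring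

theorem angle_map_le_mul_angle (e : V ≃L[ℝ] W) {x y : V} (hx : x ≠ 0) (hy : y ≠ 0) :
    angle (e x) (e y) ≤ π * ‖(e : V →L[ℝ] W)‖ * ‖(e.symm : W →L[ℝ] V)‖ * angle x y := by
  have h := angle_map_le_mul_angle_of_norm_eq_one e (norm_normalize_eq_one_iff.mpr hx)
    (norm_normalize_eq_one_iff.mpr hy)
  rwa [angle_normalize_left, angle_normalize_right, NormedSpace.normalize, NormedSpace.normalize,
    map_smul, map_smul, angle_smul_left_of_pos _ _ (by positivity),
    angle_smul_right_of_pos _ _ (by positivity)] at h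

theorem angle_le_mul_angle_map (e : V ≃L[ℝ] W) {x y : V} (hx : x ≠ 0) (hy : y ≠ 0) :
    angle x y ≤ π * ‖(e : V →L[ℝ] W)‖ * ‖(e.symm : W →L[ℝ] V)‖ * angle (e x) (e y) := by
  have h := angle_map_le_mul_angle e.symm (x := e x) (y := e y) (by simpa using hx)
    (by simpa using hy)
  rwa [e.symm_apply_apply, e.symm_apply_apply, e.symm_symm, mul_right_comm π] at h

end InnerProductGeometry

noncomputable def Matrix.GeneralLinearGroup.toEuclideanCLE {n : Type*} [Fintype n]
    [DecidableEq n] (M : GL n ℝ) : EuclideanSpace ℝ n ≃L[ℝ] EuclideanSpace ℝ n :=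
  ContinuousLinearEquiv.unitsEquiv ℝ _
    (Units.map (Matrix.toEuclideanCLM (n := n) (𝕜 := ℝ) : Matrix n n ℝ →* _) M)

theorem matApply_eq_toEuclideanCLE (M : Matrix.SpecialLinearGroup (Fin 2) ℝ)
    (v : EuclideanSpace ℝ (Fin 2)) :
    matApply M v = (Matrix.SpecialLinearGroup.toGL M).toEuclideanCLE v := by
  simp only [Matrix.GeneralLinearGroup.toEuclideanCLE, ContinuousLinearEquiv.unitsEquiv_apply,
    Units.coe_map, MonoidHom.coe_coe]
  rfl

/-- For every `M ∈ SL(2,ℝ)` there are constants `m₁, m₂ ∈ (0,∞)` such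
that for all nonzero `A, B ∈ ℝ²`, if `Δθ` is the (undirected) angle between `A` and `B`
and `Δθ̃` the angle between `MA` and `MB`, then `m₁ Δθ ≤ Δθ̃ ≤ m₂ Δθ`. -/
theorem angle_comparable_under_SL2
    (M : Matrix.SpecialLinearGroup (Fin 2) ℝ) :
    ∃ m₁ m₂ : ℝ, 0 < m₁ ∧ 0 < m₂ ∧
      ∀ A B : EuclideanSpace ℝ (Fin 2), A ≠ 0 → B ≠ 0 →
        m₁ * angle A B ≤ angle (matApply (M : Matrix (Fin 2) (Fin 2) ℝ) A)
            (matApply (M : Matrix (Fin 2) (Fin 2) ℝ) B) ∧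
          angle (matApply (M : Matrix (Fin 2) (Fin 2) ℝ) A)
              (matApply (M : Matrix (Fin 2) (Fin 2) ℝ) B) ≤ m₂ * angle A B := by
  obtain ⟨e, he⟩ : ∃ e : EuclideanSpace ℝ (Fin 2) ≃L[ℝ] EuclideanSpace ℝ (Fin 2),
      ∀ v, matApply M v = e v :=
    ⟨_, matApply_eq_toEuclideanCLE M⟩
  have hC : 0 < π * ‖(e : EuclideanSpace ℝ (Fin 2) →L[ℝ] EuclideanSpace ℝ (Fin 2))‖ *
      ‖(e.symm : EuclideanSpace ℝ (Fin 2) →L[ℝ] EuclideanSpace ℝ (Fin 2))‖ := by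
    have := e.norm_pos
    have := e.symm.norm_pos
    positivity
  refine ⟨_, _, inv_pos.mpr hC, hC, fun A B hA hB => ?_⟩
  rw [he, he, inv_mul_le_iff₀ hC]
  exact ⟨angle_le_mul_angle_map e hA hB, angle_map_le_mul_angle e hA hB⟩
end

section
/- Let Ω be a compact abelian topological group with identity e, and let ω₁, ω₂ ∈ Ω each generate a dense cyclic subgroup of Ω (so that the translations T(ω) = ω·ω₁ and T̃(ω) = ω·ω₂ are minimal). Let f : Ω → ℝ be continuous and suppose there exist ω₀ ∈ Ω and a positive integer n₀ such that f(ω₀·ω₁^{n₀+m}) = f(ω₀·ω₁^m) for every m ∈ ℤ. Then f(ω·ω₂^{n₀}) = f(ω) for every ω ∈ Ω; that is, f is n₀-periodic with respect to every minimal translation of Ω. -/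
/-!
The right periods of `f` form a subgroup, closed when `f` is continuous. Since the orbit of `ω`
under the powers of `ω₁` is dense, the periodicity of `f` along that single orbit spreads by
continuity to all of `Ω`, so `ω₁ ^ n₀` is a period. The closed set of `x` with `x ^ n₀` a period
then contains every power of `ω₁` (as `(ω₁ ^ k) ^ n₀ = (ω₁ ^ n₀) ^ k`), hence is everything.
-/

open Set

section

variable {G X : Type*} [Group G]

def periodSubgroup (f : G → X) : Subgroup G where
  carrier := {p | ∀ y, f (y * p) = f y}
  one_mem' y := by rw [mul_one]
  mul_mem' {p q} hp hq y := by rw [← mul_assoc, hq, hp]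
  inv_mem' {p} hp y := by rw [← hp (y * p⁻¹), inv_mul_cancel_right]

theorem mem_periodSubgroup {f : G → X} {p : G} :
    p ∈ periodSubgroup f ↔ ∀ y, f (y * p) = f y :=
  Iff.rfl

variable [TopologicalSpace G] [TopologicalSpace X] [T2Space X] {f : G → X}

theorem isClosed_periodSubgroup [ContinuousMul G] (hf : Continuous f) :
    IsClosed (periodSubgroup f : Set G) := by
  simp only [periodSubgroup, Subgroup.coe_set_mk, Submonoid.coe_set_mk, Subsemigroup.coe_set_mk,
    ofPred_forall]
  exact isClosed_iInter fun y => isClosed_eq (by fun_prop) (by fun_prop)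

theorem zpow_mem_periodSubgroup_of_orbit [ContinuousMul G] {g ω : G}
    (hg : Dense (range fun n : ℤ => g ^ n)) (hf : Continuous f) (k : ℤ)
    (hper : ∀ m : ℤ, f (ω * g ^ (k + m)) = f (ω * g ^ m)) :
    g ^ k ∈ periodSubgroup f := by
  have hshift : (fun z => f (ω * z * g ^ k)) = fun z => f (ω * z) := by
    refine Continuous.ext_on hg (by fun_prop) (by fun_prop) ?_
    rintro _ ⟨m, rfl⟩
    simpa only [mul_assoc, ← zpow_add, add_comm] using hper m
  intro y
  simpa only [mul_inv_cancel_left] using congrFun hshift (ω⁻¹ * y)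

end

theorem Subgroup.zpow_mem_of_denseRange_zpow {G : Type*} [Group G] [TopologicalSpace G]
    [IsTopologicalGroup G] {H : Subgroup G} (hH : IsClosed (H : Set G)) {g : G}
    (hg : Dense (range fun n : ℤ => g ^ n)) {n : ℤ} (hgn : g ^ n ∈ H) (x : G) :
    x ^ n ∈ H := by
  have hclosed : IsClosed {x : G | x ^ n ∈ H} := hH.preimage (continuous_zpow n)
  have hpowers : (range fun k : ℤ => g ^ k) ⊆ {x : G | x ^ n ∈ H} := by
    rintro _ ⟨k, rfl⟩
    change (g ^ k) ^ n ∈ H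
    rw [← zpow_mul, mul_comm, zpow_mul]
    exact H.zpow_mem hgn k
  exact hclosed.closure_subset_iff.mpr hpowers (hg x)

theorem periodicity_independent_of_translation_general
    (Ω : Type) [TopologicalSpace Ω] [CommGroup Ω] [IsTopologicalGroup Ω]
    (ω₁ ω₂ : Ω)
    (h₁ : Dense (Set.range fun n : ℤ => ω₁ ^ n))
    (f : Ω → ℝ) (hf : Continuous f)
    (ω : Ω) (n₀ : ℕ)
    (hper : ∀ m : ℤ, f (ω * ω₁ ^ ((n₀ : ℤ) + m)) = f (ω * ω₁ ^ m)) :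
    ∀ x : Ω, f (x * ω₂ ^ n₀) = f x := by
  have hω₁ : ω₁ ^ (n₀ : ℤ) ∈ periodSubgroup f :=
    zpow_mem_periodSubgroup_of_orbit h₁ hf n₀ hper
  have hω₂ :=
    (periodSubgroup f).zpow_mem_of_denseRange_zpow (isClosed_periodSubgroup hf) h₁ hω₁ ω₂
  rwa [zpow_natCast, mem_periodSubgroup] at hω₂

/-- Let `Ω` be a compact abelian topological group, and suppose
`ω₁, ω₂ ∈ Ω` each generate a dense cyclic subgroup (so the corresponding translations
are minimal).  Let `f : Ω → ℝ` be continuous and suppose there are `ω₀ ∈ Ω` and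
`n₀ ≥ 1` such that `f (ω₀ * ω₁ ^ (n₀ + m)) = f (ω₀ * ω₁ ^ m)` for every `m ∈ ℤ`.
Then `f (ω * ω₂ ^ n₀) = f ω` for every `ω ∈ Ω`; i.e. `f` is `n₀`-periodic with respect
to every minimal translation. -/
theorem periodicity_independent_of_translation
    (Ω : Type) [TopologicalSpace Ω] [CompactSpace Ω] [CommGroup Ω] [IsTopologicalGroup Ω]
    (ω₁ ω₂ : Ω)
    (h₁ : Dense (Set.range fun n : ℤ => ω₁ ^ n))
    (h₂ : Dense (Set.range fun n : ℤ => ω₂ ^ n))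
    (f : Ω → ℝ) (hf : Continuous f)
    (ω : Ω) (n₀ : ℕ) (hn₀ : 0 < n₀)
    (hper : ∀ m : ℤ, f (ω * ω₁ ^ ((n₀ : ℤ) + m)) = f (ω * ω₁ ^ m)) :
    ∀ x : Ω, f (x * ω₂ ^ n₀) = f x :=
  periodicity_independent_of_translation_general Ω ω₁ ω₂ h₁ f hf ω n₀ hper
end

section
/- Let Ω be a compact metrizable topological group with identity e, let d be a translation-invariant metric inducing the topology of Ω, and let ω₀ ∈ Ω be such that {ω₀ⁿ : n ∈ ℤ} is dense in Ω. Define F : Ω → ℓ∞(ℤ) by F(ω)(n) = d(e, ω·ω₀ⁿ). Then F is continuous and injective; hence (Ω being compact) F is a topological embedding of Ω into ℓ∞(ℤ). -/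
/-!
Right invariance makes each coordinate `ω ↦ d(1, ω * ω₀ ^ n)` 1-Lipschitz, so `F` is 1-Lipschitz
into `ℓ∞(ℤ)`. Left invariance gives `d(1, ω * ω₀ ^ n) = d(ω⁻¹, ω₀ ^ n)`, so `F ω` records the
distances from `ω⁻¹` to the dense set `{ω₀ ^ n}`, and these determine `ω⁻¹`. A continuous
injection of a compact space into a Hausdorff space is an embedding.
-/

open Metric
open scoped ENNReal lp

theorem memℓp_infty_dist {X ι : Type*} [PseudoMetricSpace X] [BoundedSpace X] (x : X) (f : ι → X) :
    Memℓp (fun i => dist x (f i)) ∞ :=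
  memℓp_infty ⟨diam (Set.univ : Set X), by
    rintro - ⟨i, rfl⟩
    simpa only [Real.norm_eq_abs, abs_dist] using dist_le_diam_of_mem
      (Bornology.isBounded_univ.2 inferInstance) (Set.mem_univ x) (Set.mem_univ (f i))⟩

theorem eq_of_dist_eq_on_dense {X : Type*} [MetricSpace X] {s : Set X} (hs : Dense s) {x y : X}
    (h : ∀ z ∈ s, dist x z = dist y z) : x = y := by
  have hdist : (dist x ·) = (dist y ·) := Continuous.ext_on hs
    (continuous_const.dist continuous_id) (continuous_const.dist continuous_id) h
  simpa using congrFun hdist y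

section TranslateDistProfile

variable {G ι : Type*} [Group G] [MetricSpace G] [BoundedSpace G]

noncomputable def translateDistProfile (g : ι → G) (ω : G) : ℓ^∞(ι, ℝ) :=
  ⟨fun i => dist 1 (ω * g i), memℓp_infty_dist 1 _⟩

@[simp]
theorem translateDistProfile_apply (g : ι → G) (ω : G) (i : ι) :
    translateDistProfile g ω i = dist 1 (ω * g i) := rfl

theorem lipschitzWith_one_translateDistProfile
    (hright : ∀ a x y : G, dist (x * a) (y * a) = dist x y) (g : ι → G) :
    LipschitzWith 1 (translateDistProfile g) :=
  (LipschitzWith.coordinate 1).2 fun i => by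
    simpa only [translateDistProfile_apply, mul_one, Function.comp_def] using
      (LipschitzWith.dist_right 1).comp (Isometry.of_dist_eq (hright (g i))).lipschitz

theorem translateDistProfile_injective
    (hleft : ∀ a x y : G, dist (a * x) (a * y) = dist x y) {g : ι → G} (hg : DenseRange g) :
    Function.Injective (translateDistProfile g) := by
  intro ω ω' h
  have hdist (ν : G) (z : G) : dist 1 (ν * z) = dist ν⁻¹ z := by
    rw [← hleft ν⁻¹, mul_one, inv_mul_cancel_left]
  refine inv_injective (eq_of_dist_eq_on_dense hg ?_)
  rintro - ⟨i, rfl⟩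
  rw [← hdist, ← hdist, ← translateDistProfile_apply, h, translateDistProfile_apply]

end TranslateDistProfile

theorem embedding_into_linfty_general
    (Ω : Type) [MetricSpace Ω] [CompactSpace Ω] [Group Ω]
    (hinv : ∀ a x y : Ω, dist (a * x) (a * y) = dist x y ∧ dist (x * a) (y * a) = dist x y)
    (ω₀ : Ω) (hgen : Dense (Set.range fun n : ℤ => ω₀ ^ n)) :
    ∃ F : Ω → lp (fun _ : ℤ => ℝ) ⊤,
      (∀ (ω : Ω) (n : ℤ), F ω n = dist (1 : Ω) (ω * ω₀ ^ n)) ∧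
        Continuous F ∧ Function.Injective F ∧ Topology.IsEmbedding F := by
  have hcont : Continuous (translateDistProfile (ω₀ ^ · : ℤ → Ω)) :=
    (lipschitzWith_one_translateDistProfile (fun a x y => (hinv a x y).2) _).continuous
  have hinj : Function.Injective (translateDistProfile (ω₀ ^ · : ℤ → Ω)) :=
    translateDistProfile_injective (fun a x y => (hinv a x y).1) hgen
  exact ⟨_, translateDistProfile_apply _, hcont, hinj, (hcont.isClosedEmbedding hinj).isEmbedding⟩

/-- Let `Ω` be a compact metrizable topological group whose topology is
induced by a translation-invariant metric `dist`, and let `ω₀` generate a dense cyclic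
subgroup of `Ω`.  Let `F : Ω → ℓ∞(ℤ)` be given by `F(ω)(n) = dist(1, ω * ω₀ ^ n)`.
Then `F` is continuous and injective, hence (by compactness) a topological embedding
of `Ω` into `ℓ∞(ℤ)`. -/
theorem embedding_into_linfty
    (Ω : Type) [MetricSpace Ω] [CompactSpace Ω] [Group Ω] [IsTopologicalGroup Ω]
    (hinv : ∀ a x y : Ω, dist (a * x) (a * y) = dist x y ∧ dist (x * a) (y * a) = dist x y)
    (ω₀ : Ω) (hgen : Dense (Set.range fun n : ℤ => ω₀ ^ n)) :
    ∃ F : Ω → lp (fun _ : ℤ => ℝ) ⊤,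
      (∀ (ω : Ω) (n : ℤ), F ω n = dist (1 : Ω) (ω * ω₀ ^ n)) ∧
        Continuous F ∧ Function.Injective F ∧ Topology.IsEmbedding F :=
  embedding_into_linfty_general Ω hinv ω₀ hgen
end

section
/- Let m ≥ 2 be an integer and let (n_v)_{v≥0} be positive integers with n₀ = 1, n₁ > 1, n_v | n_{v+1} for all v, and n_v³ ≤ n_{v+1} ≤ n_v^{3m} for all v ≥ 1. For i ∈ ℤ let a_v(i) ∈ {0,1,…,n_v − 1} be the residue of i modulo n_v, and define V_i = Σ_{v=1}^{∞} a_v(i)/(n_{v−1}²·n_v) (the series converges). Then for all i₁, i₂ ∈ ℤ with i₁ ≠ i₂: if |i₁ − i₂| < n₁ then |V_{i₁} − V_{i₂}| ≥ (2/3)·n₁^{−(3m+1)}, and if |i₁ − i₂| ≥ n₁ then |V_{i₁} − V_{i₂}| ≥ (2/3)·|i₁ − i₂|^{−(3m+1)}. In particular, the sequence (V_i) is a distal limit-periodic sequence with polynomially bounded approximation function. -/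
/-- The residue of `i` modulo `n_v`, as a natural number in `{0, …, n_v − 1}`. -/
def residue (nv : ℕ) (i : ℤ) : ℕ := (i % (nv : ℤ)).toNat

/-- The limit-periodic sequence `V_i = ∑_{v ≥ 1} a_v(i) / (n_{v−1}² n_v)`. -/
noncomputable def distalV (n : ℕ → ℕ) (i : ℤ) : ℝ :=
  ∑' v : ℕ, (residue (n (v + 1)) i : ℝ) / ((n v : ℝ) ^ 2 * (n (v + 1) : ℝ))

/-!
Let `k = i₁ - i₂ ≠ 0` and let `w` be the index with `n_w ∣ k` but `n_{w+1} ∤ k`. The terms of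
`V_{i₁} - V_{i₂}` with `v < w` vanish, since `a_{v+1}` is `n_{v+1}`-periodic and `n_{v+1} ∣ k`.
The digit difference `a_{w+1}(i₁) - a_{w+1}(i₂)` is `≡ k` modulo `n_{w+1}`, hence nonzero and
divisible by `n_w`, so the `w`-th term has size at least `1 / (n_w n_{w+1})`. Since `n_v` at
least doubles from `v = 1` on, the remaining terms add up to at most `(4/3) / n_{w+1}²`.
For `w ≥ 1` this is at most a third of the leading term because `n_{w+1} ≥ n_w³`, and
`n_w n_{w+1} ≤ n_w^{3m+1} ≤ |k|^{3m+1}`; for `w = 0` the difference is still at least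
`1 / (3 n₁)`.
-/

lemma natCast_residue {N : ℕ} (hN : N ≠ 0) (i : ℤ) : (residue N i : ℤ) = i % N :=
  Int.toNat_of_nonneg (Int.emod_nonneg i (Int.natCast_ne_zero.mpr hN))

lemma residue_lt {N : ℕ} (hN : N ≠ 0) (i : ℤ) : residue N i < N := by
  have hlt := Int.emod_lt_of_pos i (Int.natCast_pos.mpr (Nat.pos_of_ne_zero hN))
  have hcast := natCast_residue hN i
  omega

lemma residue_eq_of_modEq {N : ℕ} {i₁ i₂ : ℤ} (h : i₁ ≡ i₂ [ZMOD N]) :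
    residue N i₁ = residue N i₂ :=
  congrArg Int.toNat h

lemma residue_sub_residue_modEq {N : ℕ} (hN : N ≠ 0) (i₁ i₂ : ℤ) :
    (residue N i₁ : ℤ) - residue N i₂ ≡ i₁ - i₂ [ZMOD N] := by
  rw [natCast_residue hN, natCast_residue hN]
  exact (Int.mod_modEq i₁ N).sub (Int.mod_modEq i₂ N)

section Growth

variable {n : ℕ → ℕ}

lemma dvd_of_forall_dvd_succ (hdvd : ∀ v, n v ∣ n (v + 1)) {a b : ℕ} (hab : a ≤ b) :
    n a ∣ n b :=
  Nat.rel_of_forall_rel_succ_of_le (· ∣ ·) hdvd hab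

lemma two_le_of_cube_le (hn1 : 1 < n 1) (hcube : ∀ v, 1 ≤ v → n v ^ 3 ≤ n (v + 1))
    {v : ℕ} (hv : 1 ≤ v) : 2 ≤ n v := by
  induction v, hv using Nat.le_induction with
  | base => exact hn1
  | succ v hv ih => exact ih.trans ((Nat.le_self_pow (by norm_num) _).trans (hcube v hv))

lemma two_mul_le_of_cube_le (hn1 : 1 < n 1) (hcube : ∀ v, 1 ≤ v → n v ^ 3 ≤ n (v + 1))
    {v : ℕ} (hv : 1 ≤ v) : 2 * n v ≤ n (v + 1) := by
  have h2 := two_le_of_cube_le hn1 hcube hv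
  calc 2 * n v ≤ n v * n v * n v := by nlinarith
    _ = n v ^ 3 := by ring
    _ ≤ n (v + 1) := hcube v hv

lemma two_pow_mul_le_of_two_mul_le {u : ℕ} (h : ∀ v, u ≤ v → 2 * n v ≤ n (v + 1)) (j : ℕ) :
    2 ^ j * n u ≤ n (j + u) := by
  induction j with
  | zero => simp
  | succ j ih =>
    calc 2 ^ (j + 1) * n u = 2 * (2 ^ j * n u) := by ring
      _ ≤ 2 * n (j + u) := by omega
      _ ≤ n (j + u + 1) := h _ (by omega)
      _ = n (j + 1 + u) := by rw [add_right_comm]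

lemma two_pow_le_of_cube_le (hn0 : n 0 = 1) (hn1 : 1 < n 1)
    (hcube : ∀ v, 1 ≤ v → n v ^ 3 ≤ n (v + 1)) (v : ℕ) : 2 ^ v ≤ n v := by
  cases v with
  | zero => simp [hn0]
  | succ j =>
    calc 2 ^ (j + 1) = 2 ^ j * 2 := pow_succ 2 j
      _ ≤ 2 ^ j * n 1 := Nat.mul_le_mul_left _ hn1
      _ ≤ n (j + 1) :=
        two_pow_mul_le_of_two_mul_le (fun v hv => two_mul_le_of_cube_le (v := v) hn1 hcube hv) j

lemma exists_dvd_not_dvd_succ (hn0 : n 0 = 1) (h2 : ∀ v, 2 ^ v ≤ n v) {k : ℤ} (hk : k ≠ 0) :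
    ∃ w, (n w : ℤ) ∣ k ∧ ¬ (n (w + 1) : ℤ) ∣ k := by
  by_contra! hsucc
  have hall : ∀ v, (n v : ℤ) ∣ k := fun v => by
    induction v with
    | zero => simp [hn0]
    | succ v ih => exact hsucc v ih
  have hle := Int.natAbs_le_of_dvd_ne_zero (hall k.natAbs) hk
  have hlt := (Nat.lt_two_pow_self (n := k.natAbs)).trans_le (h2 k.natAbs)
  rw [Int.natAbs_natCast] at hle
  omega

end Growth

lemma abs_div_sq_mul_le {x a b : ℝ} (ha : 0 < a) (hb : 0 < b) (hx : |x| ≤ b) :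
    |x / (a ^ 2 * b)| ≤ 1 / a ^ 2 := by
  rw [abs_div, abs_of_pos (by positivity : 0 < a ^ 2 * b),
    div_le_div_iff₀ (by positivity) (by positivity)]
  calc |x| * a ^ 2 ≤ b * a ^ 2 := by gcongr
    _ = 1 * (a ^ 2 * b) := by ring

lemma hasSum_one_div_two_pow_mul_sq (c : ℝ) :
    HasSum (fun j : ℕ => 1 / (2 ^ j * c) ^ 2) (4 / 3 / c ^ 2) := by
  have hterm : ∀ j : ℕ, 1 / (2 ^ j * c) ^ 2 = 1 / c ^ 2 * (1 / 4) ^ j := fun j => by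
    rw [mul_pow, ← pow_mul, mul_comm j 2, pow_mul, div_pow, one_pow, one_div_mul_one_div,
      mul_comm]
    norm_num
  rw [funext hterm, show 4 / 3 / c ^ 2 = 1 / c ^ 2 * (1 - 1 / 4)⁻¹ by norm_num; ring]
  exact (hasSum_geometric_of_lt_one (by norm_num) (by norm_num)).mul_left _

lemma summable_of_abs_le_one_div_two_pow_mul_sq {f : ℕ → ℝ} {c : ℝ}
    (hf : ∀ j, |f j| ≤ 1 / (2 ^ j * c) ^ 2) : Summable f :=
  (hasSum_one_div_two_pow_mul_sq c).summable.of_norm_bounded hf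

lemma abs_tsum_le_of_abs_le_one_div_two_pow_mul_sq {f : ℕ → ℝ} {c : ℝ}
    (hf : ∀ j, |f j| ≤ 1 / (2 ^ j * c) ^ 2) : |∑' j, f j| ≤ 4 / 3 / c ^ 2 := by
  simpa only [Real.norm_eq_abs] using
    tsum_of_norm_bounded (f := f) (hasSum_one_div_two_pow_mul_sq c) hf

noncomputable def distalTerm (n : ℕ → ℕ) (i : ℤ) (v : ℕ) : ℝ :=
  (residue (n (v + 1)) i : ℝ) / ((n v : ℝ) ^ 2 * (n (v + 1) : ℝ))

section DistalTerm

variable {n : ℕ → ℕ}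

lemma distalV_eq_tsum (i : ℤ) : distalV n i = ∑' v, distalTerm n i v := rfl

lemma abs_distalTerm_le (hpos : ∀ v, 0 < n v) (i : ℤ) (v : ℕ) :
    |distalTerm n i v| ≤ 1 / (n v : ℝ) ^ 2 := by
  refine abs_div_sq_mul_le (by exact_mod_cast hpos v) (by exact_mod_cast hpos (v + 1)) ?_
  rw [Nat.abs_cast]
  exact_mod_cast (residue_lt (hpos (v + 1)).ne' i).le

lemma abs_distalTerm_sub_le (hpos : ∀ v, 0 < n v) (i₁ i₂ : ℤ) (v : ℕ) :
    |distalTerm n i₁ v - distalTerm n i₂ v| ≤ 1 / (n v : ℝ) ^ 2 := by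
  rw [distalTerm, distalTerm, ← sub_div]
  refine abs_div_sq_mul_le (by exact_mod_cast hpos v) (by exact_mod_cast hpos (v + 1)) ?_
  exact abs_sub_le_of_nonneg_of_le (Nat.cast_nonneg _)
    (by exact_mod_cast (residue_lt (hpos (v + 1)).ne' i₁).le) (Nat.cast_nonneg _)
    (by exact_mod_cast (residue_lt (hpos (v + 1)).ne' i₂).le)

lemma summable_distalTerm (h2 : ∀ v, 2 ^ v ≤ n v) (i : ℤ) : Summable (distalTerm n i) := by
  have hpos : ∀ v, 0 < n v := fun v => (Nat.two_pow_pos v).trans_le (h2 v)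
  refine summable_of_abs_le_one_div_two_pow_mul_sq (c := 1) fun v => ?_
  refine (abs_distalTerm_le hpos i v).trans ?_
  rw [mul_one]
  gcongr
  exact_mod_cast h2 v

lemma distalTerm_eq_of_dvd (hdvd : ∀ v, n v ∣ n (v + 1)) {w : ℕ} {i₁ i₂ : ℤ}
    (hw : (n w : ℤ) ∣ i₁ - i₂) {v : ℕ} (hv : v < w) : distalTerm n i₁ v = distalTerm n i₂ v := by
  have hv1 : (n (v + 1) : ℤ) ∣ i₁ - i₂ :=
    (Int.natCast_dvd_natCast.mpr (dvd_of_forall_dvd_succ hdvd hv)).trans hw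
  rw [distalTerm, distalTerm, residue_eq_of_modEq (Int.modEq_iff_dvd.mpr hv1).symm]

lemma one_div_mul_le_abs_distalTerm_sub (hpos : ∀ v, 0 < n v) {w : ℕ} (hdvd : n w ∣ n (w + 1))
    {i₁ i₂ : ℤ} (hw : (n w : ℤ) ∣ i₁ - i₂) (hw1 : ¬ (n (w + 1) : ℤ) ∣ i₁ - i₂) :
    1 / ((n w : ℝ) * n (w + 1)) ≤ |distalTerm n i₁ w - distalTerm n i₂ w| := by
  set d : ℤ := residue (n (w + 1)) i₁ - residue (n (w + 1)) i₂ with hd_def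
  have hd : d ≡ i₁ - i₂ [ZMOD n (w + 1)] := residue_sub_residue_modEq (hpos _).ne' i₁ i₂
  have hd0 : d ≠ 0 := fun h => hw1 (Int.modEq_zero_iff_dvd.mp (h ▸ hd).symm)
  have hdw : (n w : ℤ) ∣ d :=
    ((hd.of_dvd (Int.natCast_dvd_natCast.mpr hdvd)).dvd_iff).mpr hw
  have hdR : (n w : ℝ) ≤ |(d : ℝ)| := by
    rw [← Int.cast_abs]
    exact_mod_cast Int.le_of_dvd (abs_pos.mpr hd0) ((dvd_abs _ _).mpr hdw)
  have hnum : (residue (n (w + 1)) i₁ : ℝ) - residue (n (w + 1)) i₂ = d := by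
    rw [hd_def]
    push_cast
    ring
  have hnw : (0 : ℝ) < n w := by exact_mod_cast hpos w
  have hnw1 : (0 : ℝ) < n (w + 1) := by exact_mod_cast hpos (w + 1)
  rw [distalTerm, distalTerm, ← sub_div, hnum, abs_div,
    abs_of_pos (by positivity : (0 : ℝ) < (n w : ℝ) ^ 2 * n (w + 1)),
    div_le_div_iff₀ (by positivity) (by positivity)]
  calc 1 * ((n w : ℝ) ^ 2 * n (w + 1)) = n w * (n w * n (w + 1)) := by ring
    _ ≤ |(d : ℝ)| * (n w * n (w + 1)) := by gcongr

lemma abs_tsum_distalTerm_sub_le (hpos : ∀ v, 0 < n v) {u : ℕ}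
    (hu : ∀ j, 2 ^ j * n u ≤ n (j + u)) (i₁ i₂ : ℤ) :
    |∑' j, (distalTerm n i₁ (j + u) - distalTerm n i₂ (j + u))| ≤ 4 / 3 / (n u : ℝ) ^ 2 := by
  refine abs_tsum_le_of_abs_le_one_div_two_pow_mul_sq fun j => ?_
  refine (abs_distalTerm_sub_le hpos i₁ i₂ _).trans ?_
  have hnu : (0 : ℝ) < n u := by exact_mod_cast hpos u
  gcongr
  exact_mod_cast hu j

theorem one_div_mul_sub_le_abs_distalV_sub (h2 : ∀ v, 2 ^ v ≤ n v)
    (hdvd : ∀ v, n v ∣ n (v + 1)) {w : ℕ} (hdouble : ∀ j, 2 ^ j * n (w + 1) ≤ n (j + (w + 1)))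
    {i₁ i₂ : ℤ} (hw : (n w : ℤ) ∣ i₁ - i₂) (hw1 : ¬ (n (w + 1) : ℤ) ∣ i₁ - i₂) :
    1 / ((n w : ℝ) * n (w + 1)) - 4 / 3 / (n (w + 1) : ℝ) ^ 2 ≤
      |distalV n i₁ - distalV n i₂| := by
  have hpos : ∀ v, 0 < n v := fun v => (Nat.two_pow_pos v).trans_le (h2 v)
  set g : ℕ → ℝ := fun v => distalTerm n i₁ v - distalTerm n i₂ v
  have hg : Summable g := (summable_distalTerm h2 i₁).sub (summable_distalTerm h2 i₂)
  have hsplit : distalV n i₁ - distalV n i₂ = g w + ∑' j, g (j + (w + 1)) := by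
    rw [distalV_eq_tsum, distalV_eq_tsum,
      ← (summable_distalTerm h2 i₁).tsum_sub (summable_distalTerm h2 i₂),
      ← hg.sum_add_tsum_nat_add (w + 1), Finset.sum_range_succ,
      Finset.sum_eq_zero fun v hv =>
        sub_eq_zero.mpr (distalTerm_eq_of_dvd hdvd hw (Finset.mem_range.mp hv)), zero_add]
  rw [hsplit]
  calc 1 / ((n w : ℝ) * n (w + 1)) - 4 / 3 / (n (w + 1) : ℝ) ^ 2
      ≤ |g w| - |∑' j, g (j + (w + 1))| :=
        sub_le_sub (one_div_mul_le_abs_distalTerm_sub hpos (hdvd w) hw hw1)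
          (abs_tsum_distalTerm_sub_le hpos hdouble i₁ i₂)
    _ ≤ _ := abs_sub_abs_le_abs_add _ _

end DistalTerm

lemma two_div_three_mul_inv_pow_le_of_two_le {b M : ℝ} {p : ℕ} (hb : 2 ≤ b) (hbM : b ≤ M)
    (hp : 2 ≤ p) : 2 / 3 * (M ^ p)⁻¹ ≤ 1 / b - 4 / 3 / b ^ 2 := by
  have hM : 2 * b ≤ M ^ p :=
    calc 2 * b ≤ M ^ 2 := by nlinarith
      _ ≤ M ^ p := pow_le_pow_right₀ (by linarith) hp
  calc 2 / 3 * (M ^ p)⁻¹ ≤ 2 / 3 * (2 * b)⁻¹ := by gcongr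
    _ ≤ 1 / b - 4 / 3 / b ^ 2 := by
      rw [← sub_nonneg]
      have hb0 : 0 < b := by linarith
      field_simp
      nlinarith

lemma two_div_three_mul_inv_pow_le_of_cube_le {a b M : ℝ} {q : ℕ} (ha : 2 ≤ a) (hab : a ^ 3 ≤ b)
    (hb : b ≤ a ^ q) (haM : a ≤ M) : 2 / 3 * (M ^ (q + 1))⁻¹ ≤ 1 / (a * b) - 4 / 3 / b ^ 2 := by
  have ha0 : 0 < a := by linarith
  have hb0 : 0 < b := lt_of_lt_of_le (by positivity) hab
  have h4a : 4 * a ≤ b := by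
    nlinarith [mul_nonneg (mul_nonneg ha0.le (sub_nonneg.mpr ha)) (by linarith : (0 : ℝ) ≤ a + 2)]
  have hM : a * b ≤ M ^ (q + 1) :=
    calc a * b ≤ a * a ^ q := by gcongr
      _ = a ^ (q + 1) := by ring
      _ ≤ M ^ (q + 1) := by gcongr
  calc 2 / 3 * (M ^ (q + 1))⁻¹ ≤ 2 / 3 * (a * b)⁻¹ := by gcongr
    _ ≤ 1 / (a * b) - 4 / 3 / b ^ 2 := by
      rw [← sub_nonneg]
      field_simp
      nlinarith

lemma two_div_three_mul_inv_pow_le {m : ℕ} {n : ℕ → ℕ} (hn0 : n 0 = 1) (hn1 : 1 < n 1)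
    (hgrow : ∀ v, 1 ≤ v → n v ^ 3 ≤ n (v + 1) ∧ n (v + 1) ≤ n v ^ (3 * m)) (w : ℕ) {M : ℝ}
    (hM1 : n 1 ≤ M) (hMw : n w ≤ M) :
    2 / 3 * (M ^ (3 * m + 1))⁻¹ ≤ 1 / ((n w : ℝ) * n (w + 1)) - 4 / 3 / (n (w + 1) : ℝ) ^ 2 := by
  rcases Nat.eq_zero_or_pos w with rfl | hw
  · have hm : 3 ≤ 3 * m :=
      (Nat.pow_le_pow_iff_right hn1).mp ((hgrow 1 le_rfl).1.trans (hgrow 1 le_rfl).2)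
    rw [hn0, Nat.cast_one, one_mul]
    exact two_div_three_mul_inv_pow_le_of_two_le (by exact_mod_cast hn1) hM1 (by omega)
  · exact two_div_three_mul_inv_pow_le_of_cube_le
      (by exact_mod_cast two_le_of_cube_le hn1 (fun v hv => (hgrow v hv).1) hw)
      (by exact_mod_cast (hgrow w hw).1) (by exact_mod_cast (hgrow w hw).2) hMw

theorem distal_sequence_lower_bound_general
    (m : ℕ) (n : ℕ → ℕ)
    (hn0 : n 0 = 1) (hn1 : 1 < n 1) (hdvd : ∀ v, n v ∣ n (v + 1))
    (hgrow : ∀ v, 1 ≤ v → n v ^ 3 ≤ n (v + 1) ∧ n (v + 1) ≤ n v ^ (3 * m)) :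
    (∀ i : ℤ, Summable fun v : ℕ =>
        (residue (n (v + 1)) i : ℝ) / ((n v : ℝ) ^ 2 * (n (v + 1) : ℝ))) ∧
      ∀ i₁ i₂ : ℤ, i₁ ≠ i₂ →
        ((|i₁ - i₂| < (n 1 : ℤ)) →
            (2 / 3) * ((n 1 : ℝ) ^ (3 * m + 1))⁻¹ ≤ |distalV n i₁ - distalV n i₂|) ∧
          (((n 1 : ℤ) ≤ |i₁ - i₂|) →
            (2 / 3) * ((|i₁ - i₂| : ℝ) ^ (3 * m + 1))⁻¹ ≤
              |distalV n i₁ - distalV n i₂|) := by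
  have hcube : ∀ v, 1 ≤ v → n v ^ 3 ≤ n (v + 1) := fun v hv => (hgrow v hv).1
  have h2 := two_pow_le_of_cube_le hn0 hn1 hcube
  refine ⟨summable_distalTerm h2, fun i₁ i₂ hne => ?_⟩
  have hk : i₁ - i₂ ≠ 0 := sub_ne_zero.mpr hne
  obtain ⟨w, hw, hw1⟩ := exists_dvd_not_dvd_succ hn0 h2 hk
  have hdiff := one_div_mul_sub_le_abs_distalV_sub h2 hdvd
    (two_pow_mul_le_of_two_mul_le fun _ hv => two_mul_le_of_cube_le hn1 hcube (by omega)) hw hw1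
  have hwk : (n w : ℤ) ≤ |i₁ - i₂| := Int.le_of_dvd (abs_pos.mpr hk) ((dvd_abs _ _).mpr hw)
  refine ⟨fun hlt => ?_, fun hge => ?_⟩
  · refine (two_div_three_mul_inv_pow_le hn0 hn1 hgrow w le_rfl ?_).trans hdiff
    exact_mod_cast (hwk.trans hlt.le)
  · refine (two_div_three_mul_inv_pow_le hn0 hn1 hgrow w ?_ ?_).trans hdiff
    · exact_mod_cast hge
    · exact_mod_cast hwk

/-- Let `m ≥ 2` and `(n_v)` be positive integers with `n₀ = 1`,
`n₁ > 1`, `n_v ∣ n_{v+1}`, and `n_v ^ 3 ≤ n_{v+1} ≤ n_v ^ (3m)` for `v ≥ 1`.  With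
`a_v(i)` the residue of `i` mod `n_v` and `V_i = ∑_{v ≥ 1} a_v(i)/(n_{v−1}² n_v)` (the
series converges), one has for all `i₁ ≠ i₂`: if `|i₁ − i₂| < n₁` then
`|V_{i₁} − V_{i₂}| ≥ (2/3) n₁^{−(3m+1)}`, and if `|i₁ − i₂| ≥ n₁` then
`|V_{i₁} − V_{i₂}| ≥ (2/3) |i₁ − i₂|^{−(3m+1)}`; so `(V_i)` is distal with a
polynomially bounded approximation function. -/
theorem distal_sequence_lower_bound
    (m : ℕ) (hm : 2 ≤ m) (n : ℕ → ℕ) (hpos : ∀ v, 0 < n v)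
    (hn0 : n 0 = 1) (hn1 : 1 < n 1) (hdvd : ∀ v, n v ∣ n (v + 1))
    (hgrow : ∀ v, 1 ≤ v → n v ^ 3 ≤ n (v + 1) ∧ n (v + 1) ≤ n v ^ (3 * m)) :
    (∀ i : ℤ, Summable fun v : ℕ =>
        (residue (n (v + 1)) i : ℝ) / ((n v : ℝ) ^ 2 * (n (v + 1) : ℝ))) ∧
      ∀ i₁ i₂ : ℤ, i₁ ≠ i₂ →
        ((|i₁ - i₂| < (n 1 : ℤ)) →
            (2 / 3) * ((n 1 : ℝ) ^ (3 * m + 1))⁻¹ ≤ |distalV n i₁ - distalV n i₂|) ∧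
          (((n 1 : ℤ) ≤ |i₁ - i₂|) →
            (2 / 3) * ((|i₁ - i₂| : ℝ) ^ (3 * m + 1))⁻¹ ≤
              |distalV n i₁ - distalV n i₂|) :=
  distal_sequence_lower_bound_general m n hn0 hn1 hdvd hgrow
end

section
/- Let V : ℤ → ℝ be limit-periodic, i.e., V is bounded and there exist periodic sequences Vₖ : ℤ → ℝ with sup_n |V(n) − Vₖ(n)| → 0. Then the hull of V — the closure in ℓ∞(ℤ) of the set of shifts {V(· + k) : k ∈ ℤ} with respect to the sup norm — is compact and totally disconnected. -/
/-!
If `‖V - W‖ ≤ ε` with `W` periodic of period `p`, then shifts of `V` by indices that are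
congruent mod `p` are `2ε`-close. So the hull is covered by the `p` closures of the shifts in a
fixed residue class, each of diameter at most `2ε`: the hull is totally bounded. Since the
metric is shift invariant, two of these closures that meet coincide; hence a connected subset
of the hull lies in one of them and has diameter at most `2ε`, for every `ε > 0`.
-/

open Filter Topology

/-- The shift of a bounded sequence `V ∈ ℓ∞(ℤ)` (realized as the bounded continuous
functions on the discrete space `ℤ`, with the sup norm): `(shift V k)(n) = V(n + k)`. -/
noncomputable def shiftSeq (V : BoundedContinuousFunction ℤ ℝ) (k : ℤ) :
    BoundedContinuousFunction ℤ ℝ :=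
  V.compContinuous ⟨fun n => n + k, continuous_of_discreteTopology⟩

theorem IsPreconnected.subset_of_closed_cover {X ι : Type*} [TopologicalSpace X] [Finite ι]
    {F : ι → Set X} (hF : ∀ i, IsClosed (F i)) (hF' : ∀ i j, F i = F j ∨ Disjoint (F i) (F j))
    {s : Set X} (hs : IsPreconnected s) (hcover : s ⊆ ⋃ i, F i) {i : ι} {x : X}
    (hxs : x ∈ s) (hxi : x ∈ F i) : s ⊆ F i := by
  set G := ⋃ j ∈ {j | Disjoint (F i) (F j)}, F j
  have hG : IsClosed G := (Set.toFinite _).isClosed_biUnion fun j _ => hF j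
  have hdisj : Disjoint (F i) G := Set.disjoint_iUnion₂_right.2 fun _ hj => hj
  have hsub : s ⊆ F i ∪ G := fun y hy => by
    obtain ⟨j, hj⟩ := Set.mem_iUnion.1 (hcover hy)
    rcases hF' i j with h | h
    · exact Or.inl (h ▸ hj)
    · exact Or.inr (Set.mem_biUnion h hj)
  rcases isPreconnected_iff_subset_of_disjoint_closed.1 hs _ _ (hF i) hG hsub
    (by rw [hdisj.inter_eq, Set.inter_empty]) with h | h
  · exact h
  · exact absurd (h hxs) (hdisj.notMem_of_mem_left hxi)

section Shift

variable (V : BoundedContinuousFunction ℤ ℝ)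

lemma shiftSeq_apply (k n : ℤ) : shiftSeq V k n = V (n + k) := rfl

lemma shiftSeq_shiftSeq (a b : ℤ) : shiftSeq (shiftSeq V a) b = shiftSeq V (a + b) := by
  ext n
  simp only [shiftSeq_apply]
  congr 1
  ring

lemma dist_shiftSeq_le (W : BoundedContinuousFunction ℤ ℝ) (k : ℤ) :
    dist (shiftSeq V k) (shiftSeq W k) ≤ dist V W :=
  ((BoundedContinuousFunction.lipschitz_compContinuous _).dist_le_mul V W).trans_eq (by simp)

variable {V}

lemma shiftSeq_eq_of_periodic {p : ℕ} (hV : Function.Periodic V p) {a b : ℤ}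
    (h : (a : ZMod p) = b) : shiftSeq V a = shiftSeq V b := by
  obtain ⟨j, hj⟩ := (ZMod.intCast_eq_intCast_iff_dvd_sub _ _ _).1 h
  ext n
  rw [shiftSeq_apply, shiftSeq_apply, show n + b = n + a + j * p by linarith]
  exact (hV.int_mul j (n + a)).symm

lemma dist_shiftSeq_le_of_periodic {W : BoundedContinuousFunction ℤ ℝ} {p : ℕ}
    (hW : Function.Periodic W p) {a b : ℤ} (h : (a : ZMod p) = b) :
    dist (shiftSeq V a) (shiftSeq V b) ≤ 2 * dist V W :=
  calc dist (shiftSeq V a) (shiftSeq V b)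
      ≤ dist (shiftSeq V a) (shiftSeq W a) + dist (shiftSeq W b) (shiftSeq V b) := by
        rw [shiftSeq_eq_of_periodic hW h]
        exact dist_triangle _ _ _
    _ ≤ dist V W + dist W V := add_le_add (dist_shiftSeq_le V W a) (dist_shiftSeq_le W V b)
    _ = 2 * dist V W := by rw [dist_comm W V]; ring

end Shift

def HasApproximatePeriods (V : BoundedContinuousFunction ℤ ℝ) : Prop :=
  ∀ ε > 0, ∃ p : ℕ, 0 < p ∧ ∀ a b : ℤ, (a : ZMod p) = b → dist (shiftSeq V a) (shiftSeq V b) ≤ ε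

lemma hasApproximatePeriods_of_tendsto {V : BoundedContinuousFunction ℤ ℝ}
    {W : ℕ → BoundedContinuousFunction ℤ ℝ} (hW : ∀ k, ∃ p : ℕ, 0 < p ∧ Function.Periodic (W k) p)
    (hlim : Tendsto W atTop (𝓝 V)) : HasApproximatePeriods V := by
  intro ε hε
  obtain ⟨k, hk⟩ := (hlim.eventually (Metric.ball_mem_nhds V (half_pos hε))).exists
  obtain ⟨p, hp, hper⟩ := hW k
  refine ⟨p, hp, fun a b hab => (dist_shiftSeq_le_of_periodic hper hab).trans ?_⟩
  rw [dist_comm] at hk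
  linarith

def hull (V : BoundedContinuousFunction ℤ ℝ) : Set (BoundedContinuousFunction ℤ ℝ) :=
  closure (Set.range (shiftSeq V))

def shiftClass (V : BoundedContinuousFunction ℤ ℝ) (p : ℕ) (r : ZMod p) :
    Set (BoundedContinuousFunction ℤ ℝ) :=
  closure (shiftSeq V '' {m | (m : ZMod p) = r})

section ShiftClass

variable {V : BoundedContinuousFunction ℤ ℝ} {p : ℕ}

lemma hull_eq_iUnion_shiftClass [NeZero p] : hull V = ⋃ r, shiftClass V p r := by
  simp only [hull, shiftClass]
  rw [← closure_iUnion_of_finite, ← Set.image_iUnion, ← Set.image_univ]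
  congr 2
  ext m
  simp

lemma dist_le_of_mem_shiftClass {ε : ℝ}
    (hV : ∀ a b : ℤ, (a : ZMod p) = b → dist (shiftSeq V a) (shiftSeq V b) ≤ ε) {r : ZMod p}
    {x y : BoundedContinuousFunction ℤ ℝ} (hx : x ∈ shiftClass V p r) (hy : y ∈ shiftClass V p r) :
    dist x y ≤ ε :=
  closure_Iic ε ▸ map_mem_closure₂ continuous_dist hx hy <| by
    rintro _ ⟨a, ha, rfl⟩ _ ⟨b, hb, rfl⟩
    exact hV a b (ha.trans hb.symm)

lemma shiftSeq_mem_shiftClass {r s : ZMod p} {x : BoundedContinuousFunction ℤ ℝ}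
    (hr : x ∈ shiftClass V p r) (hs : x ∈ shiftClass V p s) {c : ℤ} (hc : (c : ZMod p) = s) :
    shiftSeq V c ∈ shiftClass V p r := by
  rw [shiftClass, Metric.mem_closure_iff] at hr hs ⊢
  intro η hη
  obtain ⟨_, ⟨a, ha, rfl⟩, hxa⟩ := hr (η / 2) (half_pos hη)
  obtain ⟨_, ⟨b, hb, rfl⟩, hxb⟩ := hs (η / 2) (half_pos hη)
  refine ⟨_, ⟨a + (c - b), ?_, rfl⟩, ?_⟩
  · rw [Set.mem_ofPred_eq] at ha hb ⊢
    push_cast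
    rw [ha, hb, hc, sub_self, add_zero]
  calc dist (shiftSeq V c) (shiftSeq V (a + (c - b)))
      = dist (shiftSeq (shiftSeq V b) (c - b)) (shiftSeq (shiftSeq V a) (c - b)) := by
        rw [shiftSeq_shiftSeq, shiftSeq_shiftSeq, add_sub_cancel]
    _ ≤ dist (shiftSeq V b) (shiftSeq V a) := dist_shiftSeq_le _ _ _
    _ ≤ dist (shiftSeq V b) x + dist x (shiftSeq V a) := dist_triangle _ _ _
    _ < η := by rw [dist_comm]; linarith

lemma shiftClass_eq_or_disjoint (r s : ZMod p) :
    shiftClass V p r = shiftClass V p s ∨ Disjoint (shiftClass V p r) (shiftClass V p s) := by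
  have hsub : ∀ r s : ZMod p, (shiftClass V p r ∩ shiftClass V p s).Nonempty →
      shiftClass V p s ⊆ shiftClass V p r := fun r s ⟨_, hr, hs⟩ =>
    closure_minimal (by rintro _ ⟨c, hc, rfl⟩; exact shiftSeq_mem_shiftClass hr hs hc)
      isClosed_closure
  rcases (shiftClass V p r ∩ shiftClass V p s).eq_empty_or_nonempty with h | h
  · exact Or.inr (Set.disjoint_iff_inter_eq_empty.2 h)
  · exact Or.inl ((hsub s r (Set.inter_comm _ _ ▸ h)).antisymm (hsub r s h))

end ShiftClass

section Hull

variable {V : BoundedContinuousFunction ℤ ℝ}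

lemma totallyBounded_range_shiftSeq (hV : HasApproximatePeriods V) :
    TotallyBounded (Set.range (shiftSeq V)) := by
  refine Metric.totallyBounded_iff.2 fun η hη => ?_
  obtain ⟨p, hp, hper⟩ := hV (η / 2) (half_pos hη)
  have : NeZero p := ⟨hp.ne'⟩
  refine ⟨Set.range fun r : ZMod p => shiftSeq V (r.cast : ℤ), Set.finite_range _, ?_⟩
  rintro _ ⟨m, rfl⟩
  refine Set.mem_biUnion ⟨(m : ZMod p), rfl⟩ (Metric.mem_ball.2 ?_)
  exact (hper _ _ (ZMod.intCast_zmod_cast _).symm).trans_lt (half_lt_self hη)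

lemma isCompact_hull (hV : HasApproximatePeriods V) : IsCompact (hull V) :=
  (totallyBounded_range_shiftSeq hV).closure.isCompact_of_isClosed isClosed_closure

lemma isTotallyDisconnected_hull (hV : HasApproximatePeriods V) :
    IsTotallyDisconnected (hull V) := by
  intro t ht hconn f hf g hg
  by_contra hfg
  have hpos := dist_pos.2 hfg
  obtain ⟨p, hp, hper⟩ := hV (dist f g / 2) (half_pos hpos)
  have : NeZero p := ⟨hp.ne'⟩
  have hcover : t ⊆ ⋃ r, shiftClass V p r := hull_eq_iUnion_shiftClass (V := V) (p := p) ▸ ht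
  obtain ⟨r, hfr⟩ := Set.mem_iUnion.1 (hcover hf)
  have htr := hconn.subset_of_closed_cover (fun _ => isClosed_closure)
    shiftClass_eq_or_disjoint hcover hf hfr
  linarith [dist_le_of_mem_shiftClass hper hfr (htr hg)]

end Hull

/-- Let `V : ℤ → ℝ` be limit-periodic: `V` is bounded and a uniform
limit of periodic sequences.  Then the hull of `V` — the closure in `ℓ∞(ℤ)` of the set
of shifts of `V` — is compact and totally disconnected. -/
theorem hull_isCompact_isTotallyDisconnected
    (V : BoundedContinuousFunction ℤ ℝ)
    (hlp : ∃ W : ℕ → BoundedContinuousFunction ℤ ℝ,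
      (∀ k, ∃ p : ℕ, 0 < p ∧ ∀ n : ℤ, W k (n + (p : ℤ)) = W k n) ∧
        Tendsto W atTop (𝓝 V)) :
    IsCompact (closure (Set.range fun k : ℤ => shiftSeq V k)) ∧
      IsTotallyDisconnected (closure (Set.range fun k : ℤ => shiftSeq V k)) := by
  obtain ⟨W, hWper, hWlim⟩ := hlp
  have hV := hasApproximatePeriods_of_tendsto hWper hWlim
  exact ⟨isCompact_hull hV, isTotallyDisconnected_hull hV⟩
end
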